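/- Let G(x) = exp(Σ_{k≥1} C(x^k)/k) where C is a power series with nonnegative coefficients, C(0) = 0, radius of convergence ρ ∈ (0,1), and C converges at ρ. Let A(x) be a power series with nonnegative coefficients, coefficientwise at most C, whose radius of convergence exceeds ρ. If the number of components of a uniformly random multiset-structure of total size n that belong to the A-class is denoted κ_n^A, then the expected value of κ_n^A is asymptotically Σ_{r≥1} A(ρ^r), provided [x^n]G(x) ~ g·n^{−5/2}ρ^{−n} for some g > 0. Specifically: [x^n]( G(x)·Σ_{k≥1}A(x^k) ) / [x^n]G(x) → Σ_{k≥1} A(ρ^k) as n → ∞. -/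

import Mathlib

open Filter

/-- The formal power series `Σ_{k≥1} C(x^k)/k`, where `c` is the coefficient
sequence of `C` (and `C(0) = 0`). -/
noncomputable def divLogSum (c : ℕ → ℝ) : PowerSeries ℝ :=
  PowerSeries.mk fun n => ∑ k ∈ n.divisors, c (n / k) / k

/-- The exponential `exp F` of a formal power series `F` with zero constant
term, defined coefficientwise by `[x^n] exp F = Σ_j [x^n] F^j / j!`. -/
noncomputable def expPS (F : PowerSeries ℝ) : PowerSeries ℝ :=
  PowerSeries.mk fun n =>
    ∑ j ∈ Finset.range (n + 1), PowerSeries.coeff n (F ^ j) / (Nat.factorial j)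

/-- The multiset generating function `G(x) = exp(Σ_{k≥1} C(x^k)/k)` built from
the coefficient sequence `c` of `C`. -/
noncomputable def multisetGF (c : ℕ → ℝ) : PowerSeries ℝ := expPS (divLogSum c)

/-- The series `Σ_{k≥1} A(x^k)` built from the coefficient sequence `a` of `A`. -/
noncomputable def markSum (a : ℕ → ℝ) : PowerSeries ℝ :=
  PowerSeries.mk fun n => ∑ k ∈ n.divisors, a (n / k)

lemma coeff_pow_nonneg {F : PowerSeries ℝ} (h : ∀ n, 0 ≤ PowerSeries.coeff n F)
    (j n : ℕ) : 0 ≤ PowerSeries.coeff n (F ^ j) := by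
  induction j generalizing n with
  | zero => simp only [pow_zero, PowerSeries.coeff_one]; split <;> norm_num
  | succ j ih =>
      rw [pow_succ, PowerSeries.coeff_mul]
      exact Finset.sum_nonneg fun p _ => mul_nonneg (ih _) (h _)

lemma multisetGF_coeff_nonneg {c : ℕ → ℝ} (hc : ∀ n, 0 ≤ c n) (n : ℕ) :
    0 ≤ PowerSeries.coeff n (multisetGF c) := by
  rw [multisetGF, expPS, PowerSeries.coeff_mk]
  refine Finset.sum_nonneg fun j _ => div_nonneg (coeff_pow_nonneg ?_ j n) (by positivity)
  intro i
  rw [divLogSum, PowerSeries.coeff_mk]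
  exact Finset.sum_nonneg fun k _ => div_nonneg (hc _) (by positivity)

lemma hasSum_divisor_sum (f : ℕ × ℕ → ℝ) (hf : Summable f)
    (h0 : ∀ p : ℕ × ℕ, p.1 * p.2 = 0 → f p = 0) :
    HasSum (fun n : ℕ => ∑ p ∈ n.divisorsAntidiagonal, f p) (∑' p, f p) := by
  have key := hf.hasSum.tsum_fiberwise (fun p => p.1 * p.2)
  have heq : (fun n : ℕ => ∑' (p : (fun p : ℕ × ℕ => p.1 * p.2) ⁻¹' {n}), f p)
      = fun n => ∑ p ∈ n.divisorsAntidiagonal, f p := by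
    funext n
    rcases eq_or_ne n 0 with rfl | hn
    · rw [Nat.divisorsAntidiagonal_zero, Finset.sum_empty]
      have : ∀ p : (fun p : ℕ × ℕ => p.1 * p.2) ⁻¹' {(0:ℕ)}, f p = 0 := fun p => h0 p.1 p.2
      simp only [this, tsum_zero]
    · rw [show (fun p : ℕ × ℕ => p.1 * p.2) ⁻¹' {n} = ↑n.divisorsAntidiagonal by
        ext p; simp [Nat.mem_divisorsAntidiagonal, hn],
        Finset.tsum_subtype' n.divisorsAntidiagonal f]
  rwa [heq] at key

/-- the pair function -/
noncomputable def pairF (a : ℕ → ℝ) (x : ℝ) (p : ℕ × ℕ) : ℝ :=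
  if p.1 = 0 then 0 else a p.2 * x ^ (p.1 * p.2)

lemma pairF_nonneg {a : ℕ → ℝ} (ha : ∀ n, 0 ≤ a n) {x : ℝ} (hx : 0 ≤ x) (p : ℕ × ℕ) :
    0 ≤ pairF a x p := by
  unfold pairF; split
  · exact le_refl 0
  · exact mul_nonneg (ha _) (by positivity)

lemma summable_pairF {a : ℕ → ℝ} (ha : ∀ n, 0 ≤ a n) (ha0 : a 0 = 0) {x : ℝ}
    (hx0 : 0 ≤ x) (hx1 : x < 1) (hs : Summable fun n => a n * x ^ n) :
    Summable (pairF a x) := by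
  have hu : Summable (fun k : ℕ => if k = 0 then (0:ℝ) else x ^ (k - 1)) := by
    rw [← summable_nat_add_iff 1]
    simpa using summable_geometric_of_lt_one hx0 hx1
  have hprod := hu.mul_of_nonneg hs
    (fun k => by dsimp only; split <;> positivity)
    (fun d => by exact mul_nonneg (ha d) (by positivity))
  refine hprod.of_nonneg_of_le (pairF_nonneg ha hx0) ?_
  rintro ⟨k, d⟩
  unfold pairF
  dsimp only
  rcases Nat.eq_zero_or_pos k with rfl | hk
  · simp
  simp only [if_neg hk.ne']
  rcases Nat.eq_zero_or_pos d with rfl | hd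
  · simp [ha0]
  calc a d * x ^ (k * d) ≤ a d * x ^ (k - 1 + d) := by
        refine mul_le_mul_of_nonneg_left (pow_le_pow_of_le_one hx0 hx1.le ?_) (ha d)
        obtain ⟨k', rfl⟩ := Nat.exists_eq_add_of_lt hk
        obtain ⟨d', rfl⟩ := Nat.exists_eq_add_of_lt hd
        calc 0 + k' + 1 - 1 + (0 + d' + 1) = k' + d' + 1 := by omega
          _ ≤ k' * d' + (k' + d' + 1) := Nat.le_add_left _ _
          _ = (0 + k' + 1) * (0 + d' + 1) := by ring
    _ = x ^ (k - 1) * (a d * x ^ d) := by rw [pow_add]; ring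

lemma markSum_coeff_mul_pow (a : ℕ → ℝ) (x : ℝ) (n : ℕ) :
    PowerSeries.coeff n (markSum a) * x ^ n
      = ∑ p ∈ n.divisorsAntidiagonal, pairF a x p := by
  rw [markSum, PowerSeries.coeff_mk, Finset.sum_mul,
    Nat.sum_divisorsAntidiagonal (f := fun i j => pairF a x (i, j))]
  refine Finset.sum_congr rfl fun k hk => ?_
  obtain ⟨hkd, hn0⟩ := Nat.mem_divisors.mp hk
  have hk0 : k ≠ 0 := by rintro rfl; exact hn0 (Nat.zero_dvd.mp hkd)
  rw [pairF, if_neg hk0, Nat.mul_div_cancel' hkd]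

lemma pairF_zero {a : ℕ → ℝ} (ha0 : a 0 = 0) (x : ℝ) (p : ℕ × ℕ)
    (hp : p.1 * p.2 = 0) : pairF a x p = 0 := by
  rcases Nat.mul_eq_zero.mp hp with h | h
  · simp [pairF, h]
  · simp [pairF, h, ha0]

lemma hasSum_markSum {a : ℕ → ℝ} (ha : ∀ n, 0 ≤ a n) (ha0 : a 0 = 0) {x : ℝ}
    (hx0 : 0 ≤ x) (hx1 : x < 1) (hs : Summable fun n => a n * x ^ n) :
    HasSum (fun n : ℕ => PowerSeries.coeff n (markSum a) * x ^ n)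
      (∑' p : ℕ × ℕ, pairF a x p) := by
  have key := hasSum_divisor_sum (pairF a x) (summable_pairF ha ha0 hx0 hx1 hs)
    (pairF_zero ha0 x)
  simpa only [← markSum_coeff_mul_pow] using key

lemma tsum_pairF_eq {a : ℕ → ℝ} (ha0 : a 0 = 0) {x : ℝ}
    (hsum : Summable (pairF a x)) :
    ∑' p : ℕ × ℕ, pairF a x p = ∑' r : ℕ, ∑' m : ℕ, a m * (x ^ (r + 1)) ^ m := by
  rw [Summable.tsum_prod' hsum hsum.prod_factor]
  have hksum : Summable (fun k : ℕ => ∑' d, pairF a x (k, d)) := hsum.prod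
  rw [Summable.tsum_eq_zero_add hksum]
  have h00 : (∑' d : ℕ, pairF a x (0, d)) = 0 := by
    simp [pairF]
  rw [h00, zero_add]
  refine tsum_congr fun k => tsum_congr fun d => ?_
  simp [pairF, pow_mul]

lemma field_id {a1 b A B r1 r2 : ℝ} (hb : b ≠ 0) (hA : A ≠ 0) (hB : B ≠ 0)
    (hr1 : r1 ≠ 0) (hr2 : r2 ≠ 0) :
    a1 / b = a1 * A * r1 / (b * B * (r1 * r2)) * (B / A) * r2 := by
  field_simp

lemma ratio_ident {g : ℕ → ℝ} {ρ : ℝ} (hρ0 : 0 < ρ) {n j : ℕ}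
    (hjn : j ≤ n) (hnj : 1 ≤ n - j) (hgn : 0 < g n) :
    g (n - j) / g n
      = (g (n - j) * ((n - j : ℕ) : ℝ) ^ ((5:ℝ)/2) * ρ ^ (n - j))
        / (g n * (n:ℝ) ^ ((5:ℝ)/2) * ρ ^ n)
        * (((n:ℝ) / ((n - j : ℕ) : ℝ)) ^ ((5:ℝ)/2)) * ρ ^ j := by
  have hx : (0:ℝ) < ((n - j : ℕ) : ℝ) := by exact_mod_cast hnj
  have hy : (0:ℝ) < (n : ℝ) := by
    have : 1 ≤ n := le_trans hnj (Nat.sub_le n j)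
    exact_mod_cast this
  have hA : (0:ℝ) < ((n - j : ℕ) : ℝ) ^ ((5:ℝ)/2) := Real.rpow_pos_of_pos hx _
  have hB : (0:ℝ) < (n : ℝ) ^ ((5:ℝ)/2) := Real.rpow_pos_of_pos hy _
  have hρn : ρ ^ n = ρ ^ (n - j) * ρ ^ j := (pow_sub_mul_pow ρ hjn).symm
  rw [Real.div_rpow hy.le hx.le, hρn]
  exact field_id hgn.ne' hA.ne' hB.ne' (by positivity) (by positivity)

lemma ratio_tendsto {g : ℕ → ℝ} {ρ g0 : ℝ} (hρ0 : 0 < ρ) (hg0 : 0 < g0)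
    (hG : Tendsto (fun n : ℕ => g n * (n:ℝ) ^ ((5:ℝ)/2) * ρ ^ n) atTop (nhds g0))
    (hpos : ∀ᶠ n in atTop, 0 < g n) (j : ℕ) :
    Tendsto (fun n => g (n - j) / g n) atTop (nhds (ρ ^ j)) := by
  set φ := fun n : ℕ => g n * (n:ℝ) ^ ((5:ℝ)/2) * ρ ^ n with hφ
  have hsub : Tendsto (fun n : ℕ => n - j) atTop atTop := tendsto_sub_atTop_nat j
  have hφj : Tendsto (fun n => φ (n - j)) atTop (nhds g0) := hG.comp hsub
  have hq : Tendsto (fun n => φ (n - j) / φ n) atTop (nhds 1) := by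
    have := hφj.div hG hg0.ne'
    rw [div_self hg0.ne'] at this
    exact this
  have hd : Tendsto (fun n : ℕ => ((n - j : ℕ) : ℝ)) atTop atTop :=
    tendsto_natCast_atTop_atTop.comp hsub
  have hw0 : Tendsto (fun n : ℕ => (n:ℝ) / ((n - j : ℕ) : ℝ)) atTop (nhds 1) := by
    have h0 : Tendsto (fun n : ℕ => (j:ℝ) / ((n - j : ℕ) : ℝ)) atTop (nhds 0) :=
      tendsto_const_nhds.div_atTop hd
    have h1 : Tendsto (fun n : ℕ => 1 + (j:ℝ) / ((n - j : ℕ) : ℝ)) atTop (nhds 1) := by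
      simpa using tendsto_const_nhds.add h0
    refine h1.congr' ?_
    filter_upwards [eventually_ge_atTop (j + 1)] with n hn
    have hx : (0:ℝ) < ((n - j : ℕ) : ℝ) := by
      have : 1 ≤ n - j := by omega
      exact_mod_cast this
    have hcast : (n:ℝ) = ((n - j : ℕ) : ℝ) + j := by
      have hj : j ≤ n := by omega
      push_cast [Nat.cast_sub hj]
      ring
    rw [hcast, add_div, div_self hx.ne', add_comm]
  have hw : Tendsto (fun n : ℕ => ((n:ℝ) / ((n - j : ℕ) : ℝ)) ^ ((5:ℝ)/2)) atTop
      (nhds 1) := by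
    have := hw0.rpow_const (p := (5:ℝ)/2) (Or.inr (by norm_num))
    simpa using this
  have hcomb : Tendsto
      (fun n => φ (n - j) / φ n * (((n:ℝ) / ((n - j : ℕ) : ℝ)) ^ ((5:ℝ)/2)) * ρ ^ j)
      atTop (nhds (ρ ^ j)) := by
    have := (hq.mul hw).mul (tendsto_const_nhds (x := ρ ^ j))
    simpa using this
  refine Tendsto.congr' ?_ hcomb
  filter_upwards [hpos, eventually_ge_atTop (j + 1)] with n hgn hn
  exact (ratio_ident hρ0 (by omega) (by omega) hgn).symm

/-- Let `G(x) = exp(Σ_{k≥1} C(x^k)/k)` where `C` has nonnegative coefficients,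
`C(0) = 0`, radius of convergence `ρ ∈ (0,1)`, and `C` converges at `ρ`; let
`A` have nonnegative coefficients, coefficientwise at most `C`, and radius of
convergence exceeding `ρ`. If `[x^n]G ~ g·n^{−5/2}ρ^{−n}` with `g > 0`, then
the expected number of components in the `A`-class,
`[x^n](G(x)·Σ_{k≥1}A(x^k)) / [x^n]G(x)`, tends to `Σ_{r≥1} A(ρ^r)`. -/
theorem expected_components_in_subclass (c a : ℕ → ℝ) (ρ g0 : ℝ)
    (hc : ∀ n, 0 ≤ c n) (hc0 : c 0 = 0) (ha : ∀ n, 0 ≤ a n) (hac : ∀ n, a n ≤ c n)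
    (hρ0 : 0 < ρ) (hρ1 : ρ < 1)
    (hconvC : Summable fun n => c n * ρ ^ n)
    (hdivC : ∀ x : ℝ, ρ < x → ¬ Summable fun n => c n * x ^ n)
    (hradA : ∃ ρ₁ : ℝ, ρ < ρ₁ ∧ Summable fun n => a n * ρ₁ ^ n)
    (hg0 : 0 < g0)
    (hG : Tendsto
      (fun n : ℕ => PowerSeries.coeff n (multisetGF c) * (n : ℝ) ^ ((5 : ℝ) / 2) * ρ ^ n)
      atTop (nhds g0)) :
    Tendsto
      (fun n : ℕ => PowerSeries.coeff n (multisetGF c * markSum a)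
        / PowerSeries.coeff n (multisetGF c))
      atTop (nhds (∑' r : ℕ, ∑' m : ℕ, a m * (ρ ^ (r + 1)) ^ m)) := by
  obtain ⟨ρ₁, hρρ₁, hsumA1⟩ := hradA
  set g : ℕ → ℝ := fun n => PowerSeries.coeff n (multisetGF c) with hgdef
  set mm : ℕ → ℝ := fun j => PowerSeries.coeff j (markSum a) with hmmdef
  have hgnn : ∀ n, 0 ≤ g n := multisetGF_coeff_nonneg hc
  have hmmnn : ∀ j, 0 ≤ mm j := by
    intro j
    rw [hmmdef]
    simp only [markSum, PowerSeries.coeff_mk]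
    exact Finset.sum_nonneg fun k _ => ha _
  have ha0 : a 0 = 0 := le_antisymm (hc0 ▸ hac 0) (ha 0)
  -- the intermediate radius ρ₂
  set ρ₂ : ℝ := min ρ₁ ((ρ + 1) / 2) with hρ₂def
  have hρρ₂ : ρ < ρ₂ := lt_min hρρ₁ (by linarith)
  have hρ₂1 : ρ₂ < 1 := lt_of_le_of_lt (min_le_right _ _) (by linarith)
  have hρ₂0 : 0 < ρ₂ := hρ0.trans hρρ₂
  have hsumA2 : Summable fun n => a n * ρ₂ ^ n := by
    refine hsumA1.of_nonneg_of_le (fun n => mul_nonneg (ha n) (by positivity)) fun n => ?_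
    exact mul_le_mul_of_nonneg_left (pow_le_pow_left₀ hρ₂0.le (min_le_left _ _) n) (ha n)
  have hsumAρ : Summable fun n => a n * ρ ^ n := by
    refine hsumA2.of_nonneg_of_le (fun n => mul_nonneg (ha n) (by positivity)) fun n => ?_
    exact mul_le_mul_of_nonneg_left (pow_le_pow_left₀ hρ0.le hρρ₂.le n) (ha n)
  have hM2 : HasSum (fun j : ℕ => mm j * ρ₂ ^ j) (∑' p, pairF a ρ₂ p) :=
    hasSum_markSum ha ha0 hρ₂0.le hρ₂1 hsumA2
  have hMρ : HasSum (fun j : ℕ => mm j * ρ ^ j) (∑' p, pairF a ρ p) :=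
    hasSum_markSum ha ha0 hρ0.le hρ1 hsumAρ
  -- eventual positivity of g
  have hgpos : ∀ᶠ n in atTop, 0 < g n := by
    have h2 : ∀ᶠ n in atTop, g0 / 2 < g n * (n : ℝ) ^ ((5 : ℝ) / 2) * ρ ^ n :=
      hG.eventually (eventually_gt_nhds (by linarith))
    filter_upwards [h2, eventually_ge_atTop 1] with n hn hn1
    by_contra hle
    push_neg at hle
    have hpow : (0 : ℝ) < (n : ℝ) ^ ((5 : ℝ) / 2) :=
      Real.rpow_pos_of_pos (by exact_mod_cast hn1) _
    have h3 : g n * (n : ℝ) ^ ((5 : ℝ) / 2) ≤ 0 :=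
      mul_nonpos_of_nonpos_of_nonneg hle hpow.le
    have h4 : g n * (n : ℝ) ^ ((5 : ℝ) / 2) * ρ ^ n ≤ 0 :=
      mul_nonpos_of_nonpos_of_nonneg h3 (pow_pos hρ0 n).le
    linarith
  -- N₁ : two-sided bounds on φ
  obtain ⟨N₁, hN₁⟩ := Metric.tendsto_atTop.mp hG (g0 / 2) (by linarith)
  have hφlb : ∀ n, N₁ ≤ n → g0 / 2 ≤ g n * (n : ℝ) ^ ((5 : ℝ) / 2) * ρ ^ n := by
    intro n hn
    have := hN₁ n hn
    rw [Real.dist_eq, abs_sub_lt_iff] at this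
    linarith [this.2]
  have hφub : ∀ n, N₁ ≤ n → g n * (n : ℝ) ^ ((5 : ℝ) / 2) * ρ ^ n ≤ 3 * g0 / 2 := by
    intro n hn
    have := hN₁ n hn
    rw [Real.dist_eq, abs_sub_lt_iff] at this
    linarith [this.1]
  -- N₂ : Bernoulli cutoff
  have htend : Tendsto (fun N : ℕ => (1 + 1 / (N : ℝ)) ^ ((5 : ℝ) / 2) * ρ) atTop
      (nhds ρ) := by
    have h1 : Tendsto (fun N : ℕ => 1 + 1 / (N : ℝ)) atTop (nhds 1) := by
      simpa using (tendsto_const_nhds (x := (1:ℝ))).add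
        (tendsto_one_div_atTop_nhds_zero_nat)
    have h2 := (h1.rpow_const (p := (5:ℝ)/2) (Or.inr (by norm_num))).mul_const ρ
    simpa using h2
  obtain ⟨N₂, hN₂⟩ := ((htend.eventually (eventually_le_nhds hρρ₂)).and
    (eventually_ge_atTop (max N₁ 1))).exists
  obtain ⟨hN₂le, hN₂ge⟩ := hN₂
  have hN₂1 : 1 ≤ N₂ := le_trans (le_max_right _ _) hN₂ge
  have hN₂N₁ : N₁ ≤ N₂ := le_trans (le_max_left _ _) hN₂ge
  -- Gsum and K
  set Gsum : ℝ := ∑ i ∈ Finset.range N₂, g i with hGsumdef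
  have hGsum0 : 0 ≤ Gsum := Finset.sum_nonneg fun i _ => hgnn i
  have hGle : ∀ t, t < N₂ → g t ≤ Gsum := fun t ht =>
    Finset.single_le_sum (fun i _ => hgnn i) (Finset.mem_range.mpr ht)
  have hψ : Tendsto (fun n : ℕ => (n : ℝ) ^ (3:ℕ) * (ρ / ρ₂) ^ n) atTop (nhds 0) :=
    tendsto_pow_const_mul_const_pow_of_lt_one 3 (by positivity)
      ((div_lt_one hρ₂0).mpr hρρ₂)
  obtain ⟨K, hK⟩ := hψ.bddAbove_range
  have hKb : ∀ n : ℕ, (n : ℝ) ^ (3:ℕ) * (ρ / ρ₂) ^ n ≤ K := fun n =>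
    hK (Set.mem_range_self n)
  have hK0 : 0 ≤ K := le_trans (by norm_num) (hKb 0)
  have hn52 : ∀ n : ℕ, 1 ≤ n → (n : ℝ) ^ ((5 : ℝ) / 2) * ρ ^ n ≤ K * ρ₂ ^ n := by
    intro n hn1
    have hn1' : (1 : ℝ) ≤ (n : ℝ) := by exact_mod_cast hn1
    have h52 : (n : ℝ) ^ ((5 : ℝ) / 2) ≤ (n : ℝ) ^ (3:ℕ) := by
      rw [← Real.rpow_natCast (n : ℝ) 3]
      exact Real.rpow_le_rpow_of_exponent_le hn1' (by norm_num)
    have hρn : ρ ^ n = (ρ / ρ₂) ^ n * ρ₂ ^ n := by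
      rw [div_pow, div_mul_cancel₀]
      positivity
    calc (n : ℝ) ^ ((5 : ℝ) / 2) * ρ ^ n
        ≤ (n : ℝ) ^ (3:ℕ) * ρ ^ n := by
          exact mul_le_mul_of_nonneg_right h52 (by positivity)
      _ = ((n : ℝ) ^ (3:ℕ) * (ρ / ρ₂) ^ n) * ρ₂ ^ n := by rw [hρn]; ring
      _ ≤ K * ρ₂ ^ n := mul_le_mul_of_nonneg_right (hKb n) (by positivity)
  -- the dominating constant
  set C : ℝ := 3 + 2 * Gsum * K / g0 with hCdef
  have hC3 : (3 : ℝ) ≤ C := by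
    rw [hCdef]
    have : 0 ≤ 2 * Gsum * K / g0 := by positivity
    linarith
  have hC0 : 0 ≤ C := by linarith
  -- the doubly-indexed family
  set F : ℕ → ℕ → ℝ := fun n j => if j ≤ n then mm j * (g (n - j) / g n) else 0 with hFdef
  -- pointwise limits
  have h_lim : ∀ j : ℕ, Tendsto (fun n => F n j) atTop (nhds (mm j * ρ ^ j)) := by
    intro j
    have hr := ratio_tendsto hρ0 hg0 hG hgpos j
    have h2 := hr.const_mul (mm j)
    refine Tendsto.congr' ?_ h2
    filter_upwards [eventually_ge_atTop j] with n hn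
    rw [hFdef]
    simp only [if_pos hn]
    rfl
  -- the uniform bound
  have h_bound : ∀ᶠ n in atTop, ∀ j, ‖F n j‖ ≤ C * (mm j * ρ₂ ^ j) := by
    filter_upwards [eventually_ge_atTop (max N₁ 1), hgpos] with n hn hgn
    have hnN₁ : N₁ ≤ n := le_trans (le_max_left _ _) hn
    have hn1 : 1 ≤ n := le_trans (le_max_right _ _) hn
    intro j
    by_cases hjn : j ≤ n
    · have hFval : F n j = mm j * (g (n - j) / g n) := by rw [hFdef]; simp only [if_pos hjn]
      have hFnn : 0 ≤ F n j := by
        rw [hFval]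
        exact mul_nonneg (hmmnn j) (div_nonneg (hgnn _) (hgnn n))
      rw [Real.norm_of_nonneg hFnn, hFval]
      have hratio : g (n - j) / g n ≤ C * ρ₂ ^ j := by
        by_cases hcase : N₂ ≤ n - j
        · -- case A
          have hnj1 : 1 ≤ n - j := le_trans hN₂1 hcase
          rw [ratio_ident hρ0 hjn hnj1 hgn]
          have hx : (0:ℝ) < ((n - j : ℕ) : ℝ) := by exact_mod_cast hnj1
          have hxN₂ : (N₂ : ℝ) ≤ ((n - j : ℕ) : ℝ) := by exact_mod_cast hcase
          have hN₂pos : (0:ℝ) < (N₂ : ℝ) := by exact_mod_cast hN₂1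
          have hq : g (n - j) * ((n - j : ℕ) : ℝ) ^ ((5:ℝ)/2) * ρ ^ (n - j)
              / (g n * (n:ℝ) ^ ((5:ℝ)/2) * ρ ^ n) ≤ 3 := by
            have hub := hφub (n - j) (le_trans hN₂N₁ hcase)
            have hlb := hφlb n hnN₁
            have hnum0 : (0:ℝ) ≤ g (n - j) * ((n - j : ℕ) : ℝ) ^ ((5:ℝ)/2) * ρ ^ (n - j) :=
              mul_nonneg (mul_nonneg (hgnn _) (Real.rpow_nonneg (Nat.cast_nonneg _) _))
                (pow_nonneg hρ0.le _)
            have h3 : g (n - j) * ((n - j : ℕ) : ℝ) ^ ((5:ℝ)/2) * ρ ^ (n - j)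
                / (g n * (n:ℝ) ^ ((5:ℝ)/2) * ρ ^ n) ≤ (3 * g0 / 2) / (g0 / 2) :=
              div_le_div₀ (by positivity) hub (by linarith) hlb
            calc _ ≤ (3 * g0 / 2) / (g0 / 2) := h3
              _ = 3 := by field_simp
          have hq0 : (0:ℝ) ≤ g (n - j) * ((n - j : ℕ) : ℝ) ^ ((5:ℝ)/2) * ρ ^ (n - j)
              / (g n * (n:ℝ) ^ ((5:ℝ)/2) * ρ ^ n) :=
            div_nonneg
              (mul_nonneg (mul_nonneg (hgnn _) (Real.rpow_nonneg (Nat.cast_nonneg _) _))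
                (pow_nonneg hρ0.le _))
              (mul_nonneg (mul_nonneg (hgnn _) (Real.rpow_nonneg (Nat.cast_nonneg _) _))
                (pow_nonneg hρ0.le _))
          have hw : ((n:ℝ) / ((n - j : ℕ) : ℝ)) ^ ((5:ℝ)/2) * ρ ^ j ≤ ρ₂ ^ j := by
            have hbase : (n:ℝ) / ((n - j : ℕ) : ℝ) ≤ (1 + 1 / (N₂:ℝ)) ^ j := by
              have hncast : (n:ℝ) = ((n - j : ℕ) : ℝ) + j := by
                push_cast [Nat.cast_sub hjn]
                ring
              have h1 : (n:ℝ) / ((n - j : ℕ) : ℝ) = 1 + (j:ℝ) / ((n - j : ℕ) : ℝ) := by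
                rw [hncast, add_div, div_self hx.ne', add_comm]
              rw [h1]
              have h2 : (j:ℝ) / ((n - j : ℕ) : ℝ) ≤ (j:ℝ) / (N₂:ℝ) :=
                div_le_div_of_nonneg_left (by positivity) hN₂pos hxN₂
              have h3 : 1 + (j:ℝ) * (1 / (N₂:ℝ)) ≤ (1 + 1 / (N₂:ℝ)) ^ j :=
                one_add_mul_le_pow (le_trans (by norm_num : (-2:ℝ) ≤ 0) (by positivity)) j
              calc 1 + (j:ℝ) / ((n - j : ℕ) : ℝ) ≤ 1 + (j:ℝ) / (N₂:ℝ) := by linarith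
                _ = 1 + (j:ℝ) * (1 / (N₂:ℝ)) := by ring
                _ ≤ (1 + 1 / (N₂:ℝ)) ^ j := h3
            have hbnn : (0:ℝ) ≤ (n:ℝ) / ((n - j : ℕ) : ℝ) := by positivity
            have h4 : ((n:ℝ) / ((n - j : ℕ) : ℝ)) ^ ((5:ℝ)/2)
                ≤ ((1 + 1 / (N₂:ℝ)) ^ j) ^ ((5:ℝ)/2) :=
              Real.rpow_le_rpow hbnn hbase (by norm_num)
            have hswap : ((1 + 1 / (N₂:ℝ)) ^ j) ^ ((5:ℝ)/2)
                = ((1 + 1 / (N₂:ℝ)) ^ ((5:ℝ)/2)) ^ j := by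
              rw [← Real.rpow_natCast (1 + 1 / (N₂:ℝ)) j, ← Real.rpow_mul (by positivity),
                mul_comm, Real.rpow_mul (by positivity), Real.rpow_natCast]
            calc ((n:ℝ) / ((n - j : ℕ) : ℝ)) ^ ((5:ℝ)/2) * ρ ^ j
                ≤ ((1 + 1 / (N₂:ℝ)) ^ ((5:ℝ)/2)) ^ j * ρ ^ j := by
                  rw [← hswap]
                  exact mul_le_mul_of_nonneg_right h4 (by positivity)
              _ = ((1 + 1 / (N₂:ℝ)) ^ ((5:ℝ)/2) * ρ) ^ j := by rw [mul_pow]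
              _ ≤ ρ₂ ^ j := pow_le_pow_left₀ (by positivity) hN₂le j
          have hw0 : (0:ℝ) ≤ ((n:ℝ) / ((n - j : ℕ) : ℝ)) ^ ((5:ℝ)/2) * ρ ^ j := by
            positivity
          calc g (n - j) * ((n - j : ℕ) : ℝ) ^ ((5:ℝ)/2) * ρ ^ (n - j)
                / (g n * (n:ℝ) ^ ((5:ℝ)/2) * ρ ^ n)
                * ((n:ℝ) / ((n - j : ℕ) : ℝ)) ^ ((5:ℝ)/2) * ρ ^ j
              = (g (n - j) * ((n - j : ℕ) : ℝ) ^ ((5:ℝ)/2) * ρ ^ (n - j)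
                / (g n * (n:ℝ) ^ ((5:ℝ)/2) * ρ ^ n))
                * (((n:ℝ) / ((n - j : ℕ) : ℝ)) ^ ((5:ℝ)/2) * ρ ^ j) := by ring
            _ ≤ 3 * ρ₂ ^ j := mul_le_mul hq hw hw0 (by norm_num)
            _ ≤ C * ρ₂ ^ j := mul_le_mul_of_nonneg_right hC3 (by positivity)
        · -- case B
          push_neg at hcase
          set P : ℝ := (n:ℝ) ^ ((5:ℝ)/2) * ρ ^ n with hPdef
          have hn1' : (1:ℝ) ≤ (n:ℝ) := by exact_mod_cast hn1
          have hP : 0 < P := by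
            have : (0:ℝ) < (n:ℝ) := by linarith
            positivity
          have hφn : g0 / 2 ≤ g n * P := by
            have h := hφlb n hnN₁
            rw [hPdef, ← mul_assoc]
            exact h
          have hgnlb : (g0 / 2) / P ≤ g n := by
            rw [div_le_iff₀ hP]
            linarith
          have h1 : g (n - j) / g n ≤ Gsum / ((g0 / 2) / P) :=
            div_le_div₀ hGsum0 (hGle _ hcase) (by positivity) hgnlb
          have h2 : Gsum / ((g0 / 2) / P) = 2 * Gsum * P / g0 := by
            field_simp
          have hPK : P ≤ K * ρ₂ ^ j := by
            calc P ≤ K * ρ₂ ^ n := hn52 n hn1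
              _ ≤ K * ρ₂ ^ j :=
                mul_le_mul_of_nonneg_left (pow_le_pow_of_le_one hρ₂0.le hρ₂1.le hjn) hK0
          calc g (n - j) / g n ≤ 2 * Gsum * P / g0 := by rw [← h2]; exact h1
            _ ≤ 2 * Gsum * (K * ρ₂ ^ j) / g0 := by
                apply (div_le_div_iff_of_pos_right hg0).mpr
                exact mul_le_mul_of_nonneg_left hPK
                  (mul_nonneg (by norm_num) hGsum0)
            _ = (2 * Gsum * K / g0) * ρ₂ ^ j := by ring
            _ ≤ C * ρ₂ ^ j := by
                apply mul_le_mul_of_nonneg_right ?_ (by positivity)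
                rw [hCdef]
                linarith
      calc mm j * (g (n - j) / g n) ≤ mm j * (C * ρ₂ ^ j) :=
            mul_le_mul_of_nonneg_left hratio (hmmnn j)
        _ = C * (mm j * ρ₂ ^ j) := by ring
    · rw [hFdef]
      simp only [if_neg hjn, norm_zero]
      exact mul_nonneg hC0 (mul_nonneg (hmmnn j) (by positivity))
  -- dominated convergence
  have hboundsum : Summable (fun j : ℕ => C * (mm j * ρ₂ ^ j)) := hM2.summable.mul_left C
  have key := tendsto_tsum_of_dominated_convergence hboundsum h_lim h_bound
  -- identify the limit
  have hlimval : (∑' j : ℕ, mm j * ρ ^ j) = ∑' r : ℕ, ∑' m : ℕ, a m * (ρ ^ (r + 1)) ^ m := by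
    rw [hMρ.tsum_eq]
    exact tsum_pairF_eq ha0 (summable_pairF ha ha0 hρ0.le hρ1 hsumAρ)
  rw [hlimval] at key
  -- identify the function
  refine Tendsto.congr' ?_ key
  filter_upwards [hgpos] with n hgn
  have hts : (∑' j : ℕ, F n j) = ∑ j ∈ Finset.range (n + 1), F n j := by
    refine tsum_eq_sum fun j hj => ?_
    rw [hFdef]
    have : ¬ j ≤ n := fun hle => hj (Finset.mem_range.mpr (Nat.lt_succ_of_le hle))
    simp only [if_neg this]
  rw [hts]
  have hcoeff : PowerSeries.coeff n (multisetGF c * markSum a)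
      = ∑ j ∈ Finset.range (n + 1), mm j * g (n - j) := by
    rw [mul_comm, PowerSeries.coeff_mul, Finset.Nat.sum_antidiagonal_eq_sum_range_succ_mk]
  rw [hcoeff, Finset.sum_div]
  refine Finset.sum_congr rfl fun j hj => ?_
  have hjn : j ≤ n := Nat.lt_succ_iff.mp (Finset.mem_range.mp hj)
  rw [hFdef]
  simp only [if_pos hjn]
  rw [mul_div_assoc]
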